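/- arXiv:2012.02823 — 7 statements merged into one kernel-verified Lean document; each statement's English description precedes it below -/
import Mathlib

section
/- Let g be a polynomial lying in the holomorphic subalgebra (generated by Z₀,…,Z₃ alone), and let f = b + Σ_α a_α·W_α be affine-linear in the W-variables, with b and all a_α in the holomorphic subalgebra. Then f ⋆ g = f·g − c·Σ_α a_α·(∂g/∂Z_α). In particular f ⋆ g is again of the form (element of the holomorphic subalgebra) + Σ_α (element of the holomorphic subalgebra)·W_α, i.e. affine-linear in the W-variables. (This is the second compatibility condition showing that the geometric quantization of twistor space admits a compatible deformation quantization.) -/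
/-!
Every term of the Moyal sum with `m ≠ 0` applies some `∂/∂W` to the holomorphic `∂_Z^n g` and
vanishes; among the terms with `m = 0`, `∂_W^n f` vanishes for `|n| ≥ 2` because `f` is affine in
`W`. What is left is the term `n = 0`, giving `f g`, and the terms `n = e_α`, giving
`-c a_α ∂g/∂Z_α`.
-/

open MvPolynomial

noncomputable section

/-- The polynomial ring in the holomorphic twistor coordinates `Z α` (indexed by `Sum.inl α`)
and the conjugate coordinates `W α` (indexed by `Sum.inr α`). -/
abbrev TwistorPoly : Type := MvPolynomial (Fin 4 ⊕ Fin 4) ℂ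

/-- Partial derivative with respect to a variable, as a `ℂ`-linear endomorphism. -/
noncomputable def DOp (v : Fin 4 ⊕ Fin 4) : Module.End ℂ TwistorPoly :=
  (MvPolynomial.pderiv v).toLinearMap

/-- The iterated derivative `∂_Z^m = Π_α (∂/∂Z_α)^{m α}`. -/
noncomputable def dZ (m : Fin 4 →₀ ℕ) : Module.End ℂ TwistorPoly :=
  DOp (Sum.inl 0) ^ m 0 * DOp (Sum.inl 1) ^ m 1 * DOp (Sum.inl 2) ^ m 2 * DOp (Sum.inl 3) ^ m 3

/-- The iterated derivative `∂_W^n = Π_α (∂/∂W_α)^{n α}`. -/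
noncomputable def dW (n : Fin 4 →₀ ℕ) : Module.End ℂ TwistorPoly :=
  DOp (Sum.inr 0) ^ n 0 * DOp (Sum.inr 1) ^ n 1 * DOp (Sum.inr 2) ^ n 2 * DOp (Sum.inr 3) ^ n 3

/-- The Moyal coefficient `c^{|m|+|n|} (−1)^{|n|} / (m! n!)`. -/
noncomputable def moyalCoeff (c : ℂ) (m n : Fin 4 →₀ ℕ) : ℂ :=
  c ^ ((∑ i : Fin 4, m i) + (∑ i : Fin 4, n i)) * (-1 : ℂ) ^ (∑ i : Fin 4, n i) /
    ((∏ i : Fin 4, (Nat.factorial (m i) : ℂ)) * (∏ i : Fin 4, (Nat.factorial (n i) : ℂ)))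

/-- The Moyal star product associated to the constant symplectic form
`ω = Σ_α dZ_α ∧ dW_α`. -/
noncomputable def moyal (c : ℂ) (f g : TwistorPoly) : TwistorPoly :=
  ∑ᶠ p : (Fin 4 →₀ ℕ) × (Fin 4 →₀ ℕ),
    moyalCoeff c p.1 p.2 • (dZ p.1 (dW p.2 f) * dW p.1 (dZ p.2 g))

/-- The holomorphic subalgebra, generated by the variables `Z_0, …, Z_3` alone. -/
noncomputable def holSub : Subalgebra ℂ TwistorPoly :=
  Algebra.adjoin ℂ (Set.range fun i : Fin 4 => (X (Sum.inl i) : TwistorPoly))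

namespace MvPolynomial

variable {R σ : Type*} [CommSemiring R]

theorem pderiv_pderiv_comm (i j : σ) (p : MvPolynomial σ R) :
    pderiv i (pderiv j p) = pderiv j (pderiv i p) := by
  classical
  induction p using MvPolynomial.induction_on with
  | C a => simp
  | add p q hp hq => simp [hp, hq]
  | mul_X p k hp =>
    simp only [pderiv_mul, map_add, pderiv_X, hp]
    rcases eq_or_ne k i with rfl | hi <;> rcases eq_or_ne k j with rfl | hj <;>
      simp [*, add_comm]

theorem pderiv_eq_zero_of_mem_supported {s : Set σ} {p : MvPolynomial σ R}
    (hp : p ∈ supported R s) {i : σ} (hi : i ∉ s) : pderiv i p = 0 :=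
  pderiv_eq_zero_of_notMem_vars fun h => hi (mem_supported.1 hp h)

theorem pderiv_mem_supported {s : Set σ} {p : MvPolynomial σ R} (hp : p ∈ supported R s)
    (i : σ) : pderiv i p ∈ supported R s := by
  rw [supported_eq_adjoin_X] at hp ⊢
  induction hp using Algebra.adjoin_induction with
  | mem x hx =>
    obtain ⟨k, -, rfl⟩ := hx
    by_cases hki : k = i
    · rw [hki, pderiv_X_self]; exact one_mem _
    · rw [pderiv_X_of_ne hki]; exact zero_mem _
  | algebraMap r => rw [algebraMap_eq, pderiv_C]; exact zero_mem _
  | add x y _ _ hx hy => rw [map_add]; exact add_mem hx hy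
  | mul x y hx' hy' hx hy => rw [pderiv_mul]; exact add_mem (mul_mem hx hy') (mul_mem hx' hy)

end MvPolynomial

theorem Finsupp.exists_eq_add_single_one {ι : Type*} {n : ι →₀ ℕ} (hn : n ≠ 0) :
    ∃ j n', n = n' + single j 1 := by
  obtain ⟨j, hj⟩ := Finsupp.ne_iff.1 hn
  exact ⟨j, n - single j 1,
    (tsub_add_cancel_of_le (single_le_iff.2 (Nat.one_le_iff_ne_zero.2 hj))).symm⟩

theorem holSub_eq_supported : holSub = supported ℂ (Set.range Sum.inl) := by
  rw [holSub, supported_eq_adjoin_X, ← Set.range_comp]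
  rfl

theorem pderiv_inr_eq_zero_of_mem_holSub (j : Fin 4) {h : TwistorPoly} (hh : h ∈ holSub) :
    pderiv (Sum.inr j) h = 0 :=
  pderiv_eq_zero_of_mem_supported (holSub_eq_supported ▸ hh) (by simp)

theorem pderiv_inl_mem_holSub (i : Fin 4) {h : TwistorPoly} (hh : h ∈ holSub) :
    pderiv (Sum.inl i) h ∈ holSub :=
  holSub_eq_supported ▸ pderiv_mem_supported (holSub_eq_supported ▸ hh) _

@[simp]
theorem DOp_apply (v : Fin 4 ⊕ Fin 4) (p : TwistorPoly) : DOp v p = pderiv v p := rfl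

@[simp]
theorem dZ_zero : dZ 0 = 1 := by simp [dZ]

@[simp]
theorem dW_zero : dW 0 = 1 := by simp [dW]

theorem dZ_single (i : Fin 4) : dZ (Finsupp.single i 1) = DOp (Sum.inl i) := by
  fin_cases i <;> simp [dZ]

theorem dW_single (j : Fin 4) : dW (Finsupp.single j 1) = DOp (Sum.inr j) := by
  fin_cases j <;> simp [dW]

open scoped IsMulCommutative in
theorem dW_add (n m : Fin 4 →₀ ℕ) : dW (n + m) = dW n * dW m := by
  have hcomm : ∀ x ∈ Set.range DOp, ∀ y ∈ Set.range DOp, x * y = y * x := by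
    rintro _ ⟨v, rfl⟩ _ ⟨w, rfl⟩
    exact LinearMap.ext fun p => pderiv_pderiv_comm v w p
  have := Algebra.isMulCommutative_adjoin ℂ hcomm
  -- partial derivatives commute, so `ring` applies in the subalgebra they generate
  let Q (v : Fin 4 ⊕ Fin 4) : Algebra.adjoin ℂ (Set.range DOp) :=
    ⟨DOp v, Algebra.subset_adjoin ⟨v, rfl⟩⟩
  have hdW (n : Fin 4 →₀ ℕ) : dW n =
      ↑(Q (.inr 0) ^ n 0 * Q (.inr 1) ^ n 1 * Q (.inr 2) ^ n 2 * Q (.inr 3) ^ n 3) := rfl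
  rw [hdW, hdW, hdW, ← Subalgebra.coe_mul]
  congr 1
  simp only [Finsupp.add_apply, pow_add]
  ring

theorem dW_add_single_apply (n : Fin 4 →₀ ℕ) (j : Fin 4) (h : TwistorPoly) :
    dW (n + Finsupp.single j 1) h = dW n (pderiv (Sum.inr j) h) := by
  rw [dW_add, dW_single, Module.End.mul_apply, DOp_apply]

theorem dZ_mem_holSub (m : Fin 4 →₀ ℕ) {h : TwistorPoly} (hh : h ∈ holSub) :
    dZ m h ∈ holSub := by
  have hpow (i : Fin 4) (k : ℕ) : Set.MapsTo (DOp (Sum.inl i) ^ k) holSub holSub := by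
    rw [Module.End.coe_pow]
    exact Set.MapsTo.iterate (fun _ hp => pderiv_inl_mem_holSub i hp) k
  simp only [dZ, Module.End.coe_mul]
  exact ((hpow 0 _).comp (hpow 1 _)).comp ((hpow 2 _).comp (hpow 3 _)) hh

theorem dW_eq_zero_of_mem_holSub {n : Fin 4 →₀ ℕ} (hn : n ≠ 0) {h : TwistorPoly}
    (hh : h ∈ holSub) : dW n h = 0 := by
  obtain ⟨j, n', rfl⟩ := Finsupp.exists_eq_add_single_one hn
  rw [dW_add_single_apply, pderiv_inr_eq_zero_of_mem_holSub j hh, map_zero]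

section Affine

variable {b : TwistorPoly} {a : Fin 4 → TwistorPoly}

theorem pderiv_inr_affine (hb : b ∈ holSub) (ha : ∀ i, a i ∈ holSub) (j : Fin 4) :
    pderiv (Sum.inr j) (b + ∑ i, a i * X (Sum.inr i)) = a j := by
  classical
  simp [pderiv_inr_eq_zero_of_mem_holSub j hb, pderiv_inr_eq_zero_of_mem_holSub j (ha _),
    pderiv_X, Pi.single_apply]

theorem dW_affine_eq_zero (hb : b ∈ holSub) (ha : ∀ i, a i ∈ holSub) {n : Fin 4 →₀ ℕ}
    (hn : n ≠ 0) (hn' : ∀ j, n ≠ Finsupp.single j 1) :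
    dW n (b + ∑ i, a i * X (Sum.inr i)) = 0 := by
  obtain ⟨j, n', rfl⟩ := Finsupp.exists_eq_add_single_one hn
  have hn'0 : n' ≠ 0 := by rintro rfl; exact hn' j (zero_add _)
  rw [dW_add_single_apply, pderiv_inr_affine hb ha, dW_eq_zero_of_mem_holSub hn'0 (ha j)]

end Affine

theorem moyalCoeff_zero_zero (c : ℂ) : moyalCoeff c 0 0 = 1 := by
  simp [moyalCoeff]

theorem moyalCoeff_zero_single (c : ℂ) (j : Fin 4) :
    moyalCoeff c 0 (Finsupp.single j 1) = -c := by
  simp [moyalCoeff, Finsupp.single_apply, apply_ite]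

theorem moyal_affine_of_mem_holSub (c : ℂ) {g b : TwistorPoly} {a : Fin 4 → TwistorPoly}
    (hg : g ∈ holSub) (hb : b ∈ holSub) (ha : ∀ i, a i ∈ holSub) :
    moyal c (b + ∑ i, a i * X (Sum.inr i)) g
      = (b + ∑ i, a i * X (Sum.inr i)) * g - c • ∑ i, a i * pderiv (Sum.inl i) g := by
  classical
  set f := b + ∑ i, a i * X (Sum.inr i)
  have hfW : ∀ j, pderiv (Sum.inr j) f = a j := pderiv_inr_affine hb ha
  let S : Finset ((Fin 4 →₀ ℕ) × (Fin 4 →₀ ℕ)) :=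
    insert (0, 0) (Finset.univ.image fun j => (0, Finsupp.single j 1))
  have hsupp : Function.support (fun p : (Fin 4 →₀ ℕ) × (Fin 4 →₀ ℕ) =>
      moyalCoeff c p.1 p.2 • (dZ p.1 (dW p.2 f) * dW p.1 (dZ p.2 g))) ⊆ S := by
    rintro ⟨m, n⟩ hp
    contrapose! hp
    by_cases hm : m = 0
    · subst hm
      have hn : n ≠ 0 := by rintro rfl; simp [S] at hp
      have hn' : ∀ j, n ≠ Finsupp.single j 1 := by rintro j rfl; simp [S] at hp
      simp [show dW n f = 0 from dW_affine_eq_zero hb ha hn hn']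
    · simp [dW_eq_zero_of_mem_holSub hm (dZ_mem_holSub n hg)]
  rw [moyal, finsum_eq_sum_of_support_subset _ hsupp, Finset.sum_insert (by simp),
    Finset.sum_image fun i _ j _ h => Finsupp.single_left_injective one_ne_zero (Prod.ext_iff.1 h).2]
  simp [moyalCoeff_zero_zero, moyalCoeff_zero_single, dW_single, dZ_single, hfW,
    Finset.smul_sum, sub_eq_add_neg]

/-- For `g` holomorphic and `f = b + Σ_α a_α W_α` affine-linear in the `W`-variables with
holomorphic coefficients, `f ⋆ g = f·g − c·Σ_α a_α ∂g/∂Z_α`; in particular `f ⋆ g` is again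
affine-linear in the `W`-variables with holomorphic coefficients. -/
theorem stmt1 (c : ℂ) (g : TwistorPoly) (hg : g ∈ holSub)
    (b : TwistorPoly) (hb : b ∈ holSub) (a : Fin 4 → TwistorPoly) (ha : ∀ i, a i ∈ holSub) :
    moyal c (b + ∑ i : Fin 4, a i * X (Sum.inr i)) g
      = (b + ∑ i : Fin 4, a i * X (Sum.inr i)) * g
        - c • ∑ i : Fin 4, a i * (MvPolynomial.pderiv (Sum.inl i) g) ∧
    ∃ (b' : TwistorPoly) (a' : Fin 4 → TwistorPoly), b' ∈ holSub ∧ (∀ i, a' i ∈ holSub) ∧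
      moyal c (b + ∑ i : Fin 4, a i * X (Sum.inr i)) g
        = b' + ∑ i : Fin 4, a' i * X (Sum.inr i) := by
  have hstar := moyal_affine_of_mem_holSub c hg hb ha
  refine ⟨hstar, b * g - c • ∑ i, a i * pderiv (Sum.inl i) g, fun i => a i * g,
    sub_mem (mul_mem hb hg) (Subalgebra.smul_mem _
      (Subalgebra.sum_mem _ fun i _ => mul_mem (ha i) (pderiv_inl_mem_holSub i hg)) c),
    fun i => mul_mem (ha i) hg, ?_⟩
  rw [hstar, add_mul, Finset.sum_mul]
  simp only [mul_right_comm _ (X _) g]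
  abel

end
end

section
/- Let A be a unital ℂ-algebra with a conjugate-linear star operation, q ∈ ℂ with q·conj(q) = 1, and α, β ∈ A satisfying the defining relations of S³_θ: α·β = q·β·α, α*·β = conj(q)·β·α*, α·α* = α*·α, β·β* = β*·β, and α·α* + β·β* = 1. Set X := β·α and Y := α·α* − (1/2)·1. Then: Y* = Y, X·Y = Y·X, X*·Y = Y·X*, X·X* = X*·X, and Y² + X·X* = (1/4)·1. (Hence the U(1)-invariant elements X, X*, Y of S³_θ satisfy the relations of the algebra of functions on a commutative 2-sphere, so the base of the Hopf fibration of S³_θ remains a classical S².) -/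
/-!
Everything follows from the fact that `N = αα*` is central for the relevant elements: it commutes
with `α` by normality, and with `β` because the phases `q` and `conj q` picked up when `β` is moved
past `α` and `α*` cancel. Hence `Y = N - ½` commutes with `X = βα` and with `X*`, and
`ββ* = 1 - N` gives `XX* = X*X = N - N²`, so `Y² + XX* = ¼`.
-/

theorem commute_mul_of_mul_eq_smul {R A : Type*} [CommSemiring R] [Semiring A] [Algebra R A]
    {a b c : A} {r s : R} (hab : a * b = r • (b * a)) (hcb : c * b = s • (b * c))
    (hsr : s * r = 1) : Commute (a * c) b := by
  calc a * c * b = s • (a * b * c) := by rw [mul_assoc, hcb, mul_smul_comm, mul_assoc]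
    _ = (s * r) • (b * (a * c)) := by rw [hab, smul_mul_assoc, smul_smul, mul_assoc]
    _ = b * (a * c) := by rw [hsr, one_smul]

section

variable {A : Type*} [Ring A] [StarRing A]

theorem commute_mul_star_self_star {a x : A} (h : Commute (a * star a) x) :
    Commute (a * star a) (star x) :=
  Commute.star_right (by rwa [(IsSelfAdjoint.mul_star_self a).star_eq])

theorem mul_star_of_mul_star_add_mul_star_eq_one {a b : A}
    (hb : Commute (a * star a) (star b)) (h : a * star a + b * star b = 1) :
    b * a * star (b * a) = a * star a - a * star a * (a * star a) := by
  calc b * a * star (b * a) = b * (a * star a * star b) := by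
        simp only [star_mul, mul_assoc]
    _ = b * star b * (a * star a) := by rw [hb.eq, ← mul_assoc, ← mul_assoc]
    _ = a * star a - a * star a * (a * star a) := by
        rw [eq_sub_of_add_eq' h, sub_mul, one_mul]

theorem star_mul_of_mul_star_add_mul_star_eq_one {a b : A} (ha : Commute a (star a))
    (hb : Commute b (star b)) (h : a * star a + b * star b = 1) :
    star (b * a) * (b * a) = a * star a - a * star a * (a * star a) := by
  have hN : Commute (a * star a) a := (Commute.refl a).mul_left ha.symm
  calc star (b * a) * (b * a) = star a * (b * star b * a) := by
        simp only [star_mul, hb.eq, mul_assoc]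
    _ = star a * a - star a * (a * star a * a) := by
        rw [eq_sub_of_add_eq' h, sub_mul, one_mul, mul_sub]
    _ = a * star a - a * star a * (a * star a) := by
        rw [hN.eq, ← mul_assoc, ← ha.eq]

end

/-- Given `α`, `β` satisfying the defining relations of the θ-deformed 3-sphere `S³_θ`
(with `q` of modulus one), the invariant elements `X = βα` and `Y = αα* − ½` satisfy the
relations of the algebra of functions on a commutative 2-sphere:
`Y* = Y`, `XY = YX`, `X*Y = YX*`, `XX* = X*X`, and `Y² + XX* = ¼`. -/
theorem stmt3 {A : Type*} [Ring A] [Algebra ℂ A] [StarRing A] [StarModule ℂ A]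
    (q : ℂ) (hq : q * (starRingEnd ℂ) q = 1) (α β : A)
    (h1 : α * β = q • (β * α))
    (h2 : star α * β = ((starRingEnd ℂ) q) • (β * star α))
    (h3 : α * star α = star α * α)
    (h4 : β * star β = star β * β)
    (h5 : α * star α + β * star β = 1) :
    star (α * star α - ((1 : ℂ)/2) • (1 : A)) = α * star α - ((1 : ℂ)/2) • (1 : A) ∧
    (β * α) * (α * star α - ((1 : ℂ)/2) • (1 : A))
        = (α * star α - ((1 : ℂ)/2) • (1 : A)) * (β * α) ∧
    star (β * α) * (α * star α - ((1 : ℂ)/2) • (1 : A))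
        = (α * star α - ((1 : ℂ)/2) • (1 : A)) * star (β * α) ∧
    (β * α) * star (β * α) = star (β * α) * (β * α) ∧
    (α * star α - ((1 : ℂ)/2) • (1 : A)) ^ 2 + (β * α) * star (β * α)
        = ((1 : ℂ)/4) • (1 : A) := by
  have hNα : Commute (α * star α) α := (Commute.refl α).mul_left h3.symm
  have hNβ : Commute (α * star α) β := commute_mul_of_mul_eq_smul h1 h2 (by rwa [mul_comm])
  have hNX : Commute (α * star α) (β * α) := hNβ.mul_right hNα
  have hXX' := mul_star_of_mul_star_add_mul_star_eq_one (commute_mul_star_self_star hNβ) h5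
  have hY (x : A) (hx : Commute (α * star α) x) :
      Commute x (α * star α - ((1 : ℂ)/2) • (1 : A)) :=
    (hx.sub_left ((Commute.one_left x).smul_left _)).symm
  refine ⟨?_, hY _ hNX, hY _ (commute_mul_star_self_star hNX),
    hXX'.trans (star_mul_of_mul_star_add_mul_star_eq_one h3 h4 h5).symm, ?_⟩
  · rw [star_sub, star_mul, star_star, star_smul, star_one]
    norm_num
  · rw [hXX', sq]
    simp only [mul_sub, sub_mul, smul_mul_assoc, mul_smul_comm, mul_one, one_mul]
    module
end

section
/- In the Wick algebra on two generators with R² := ζ₀†·ζ₀ + ζ₁·ζ₁†, suppose ζ₀ is invertible in A, and set Z := ζ₀⁻¹·ζ₁. Then Z commutes with R²: R²·Z = Z·R². Similarly, if ζ₁ is invertible and W := ζ₁⁻¹·ζ₀, then R²·W = W·R². (These are the local coordinates on the deformed ℂP¹, which commute with the deformation parameter μ = −2ħR⁻².) -/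
/-!
Both generators shift `R²` by the same scalar: `ζᵢ R² = (R² + ħ) ζᵢ` for `i = 0, 1`. Hence
`ζᵢ⁻¹ (R² + ħ) = R² ζᵢ⁻¹`, and in `ζᵢ⁻¹ ζⱼ` the two shifts cancel.
-/

theorem SemiconjBy.commute_mul_of_inverse {M : Type*} [Monoid M] {a b x y u : M}
    (hux : u * x = 1) (hxu : x * u = 1) (hx : SemiconjBy x a b) (hy : SemiconjBy y a b) :
    Commute (u * y) a :=
  (SemiconjBy.units_inv_symm_left (a := ⟨x, u, hxu, hux⟩) hx).mul_left hy

theorem wick_generator_semiconjBy_radiusSq {K A : Type*} [CommSemiring K] [Ring A] [Algebra K A]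
    {hbar : K} {ζ ζd : Fin 2 → A} (hcomm : ∀ i j, ζ i * ζ j = ζ j * ζ i)
    (hccr : ∀ i j, ζ i * ζd j - ζd j * ζ i = if i = j then hbar • (1 : A) else 0) (i : Fin 2) :
    SemiconjBy (ζ i) (ζd 0 * ζ 0 + ζ 1 * ζd 1) (ζd 0 * ζ 0 + ζ 1 * ζd 1 + hbar • 1) := by
  have c00 : ζ 0 * ζd 0 - ζd 0 * ζ 0 = hbar • 1 := hccr 0 0
  have c11 : ζ 1 * ζd 1 - ζd 1 * ζ 1 = hbar • 1 := hccr 1 1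
  have c01 : ζ 0 * ζd 1 - ζd 1 * ζ 0 = 0 := hccr 0 1
  have c10 : ζ 1 * ζd 0 - ζd 0 * ζ 1 = 0 := hccr 1 0
  unfold SemiconjBy
  match i with
  | 0 => linear_combination (norm := noncomm_ring) c00 * ζ 0 + hcomm 0 1 * ζd 1 + ζ 1 * c01
  | 1 => linear_combination (norm := noncomm_ring) c10 * ζ 0 + ζd 0 * hcomm 1 0 + ζ 1 * c11

theorem stmt5_general {A : Type*} [Ring A] [Algebra ℂ A] (hbar : ℂ)
    (ζ ζd : Fin 2 → A)
    (h1 : ∀ i j, ζ i * ζ j = ζ j * ζ i)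
    (h3 : ∀ i j, ζ i * ζd j - ζd j * ζ i = if i = j then hbar • (1 : A) else 0) :
    (∀ u : A, u * ζ 0 = 1 → ζ 0 * u = 1 →
      (ζd 0 * ζ 0 + ζ 1 * ζd 1) * (u * ζ 1) = (u * ζ 1) * (ζd 0 * ζ 0 + ζ 1 * ζd 1)) ∧
    (∀ v : A, v * ζ 1 = 1 → ζ 1 * v = 1 →
      (ζd 0 * ζ 0 + ζ 1 * ζd 1) * (v * ζ 0) = (v * ζ 0) * (ζd 0 * ζ 0 + ζ 1 * ζd 1)) := by
  have shift := wick_generator_semiconjBy_radiusSq h1 h3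
  exact ⟨fun u hu₀ h₀u => ((shift 0).commute_mul_of_inverse hu₀ h₀u (shift 1)).symm,
    fun v hv₁ h₁v => ((shift 1).commute_mul_of_inverse hv₁ h₁v (shift 0)).symm⟩

/-- In the Wick algebra on two generators with `R² = ζ₀†ζ₀ + ζ₁ζ₁†`: if `ζ₀` is invertible
(with two-sided inverse `u`) then `Z = ζ₀⁻¹ζ₁` commutes with `R²`, and if `ζ₁` is invertible
(with two-sided inverse `v`) then `W = ζ₁⁻¹ζ₀` commutes with `R²`. -/
theorem stmt5 {A : Type*} [Ring A] [Algebra ℂ A] (hbar : ℂ)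
    (ζ ζd : Fin 2 → A)
    (h1 : ∀ i j, ζ i * ζ j = ζ j * ζ i)
    (h2 : ∀ i j, ζd i * ζd j = ζd j * ζd i)
    (h3 : ∀ i j, ζ i * ζd j - ζd j * ζ i = if i = j then hbar • (1 : A) else 0) :
    (∀ u : A, u * ζ 0 = 1 → ζ 0 * u = 1 →
      (ζd 0 * ζ 0 + ζ 1 * ζd 1) * (u * ζ 1) = (u * ζ 1) * (ζd 0 * ζ 0 + ζ 1 * ζd 1)) ∧
    (∀ v : A, v * ζ 1 = 1 → ζ 1 * v = 1 →
      (ζd 0 * ζ 0 + ζ 1 * ζd 1) * (v * ζ 0) = (v * ζ 0) * (ζd 0 * ζ 0 + ζ 1 * ζd 1)) :=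
  stmt5_general hbar ζ ζd h1 h3
end

section
/- In the Wick algebra on four generators, with α := 2·(ζ₀·ζ₂† + ζ₁·ζ₃†), α† := 2·(ζ₀†·ζ₂ + ζ₁†·ζ₃), x := ζ₀·ζ₀† + ζ₁·ζ₁† − ζ₂·ζ₂† − ζ₃·ζ₃†, R₀² := ζ₀†·ζ₀ + ζ₁·ζ₁†, and R₁² := ζ₂†·ζ₂ + ζ₃·ζ₃†, the following identities hold: x = R₀² − R₁², and [α, α†] = −4·ħ·x = 4·ħ·(R₁² − R₀²). In particular the commutator does not vanish, so the subalgebra generated by the images of the 4-sphere coordinates is noncommutative. -/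
/-!
Each bracket `⁅ζᵢ, ζⱼ†⁆ = δᵢⱼ ħ` is central, so the Leibniz rule collapses the bracket of two
quadratic monomials: `⁅ζᵢ ζₖ†, ζⱼ† ζₗ⁆ = ζᵢ ζⱼ† ⁅ζₖ†, ζₗ⁆ + ⁅ζᵢ, ζⱼ†⁆ ζₗ ζₖ†`. Expanding
`⁅α, α†⁆` bilinearly, the two cross terms vanish and the two diagonal ones give
`ħ (ζ₂ ζ₂† − ζ₀ ζ₀†) + ħ (ζ₃ ζ₃† − ζ₁ ζ₁†)`, i.e. `⁅α, α†⁆ = −4ħx`. The identity `x = R₀² − R₁²`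
is `ζᵢ ζᵢ† = ζᵢ† ζᵢ + ħ` for `i = 0, 2`.
-/

theorem lie_mul_mul_of_commute {R : Type*} [Ring R] {a b c d : R}
    (had : Commute a d) (hbc : Commute b c) :
    ⁅a * b, c * d⁆ = a * c * ⁅b, d⁆ + ⁅a, c⁆ * d * b := by
  simp only [Ring.lie_def]
  calc a * b * (c * d) - c * d * (a * b) = a * (b * c) * d - c * (d * a) * b := by noncomm_ring
    _ = _ := by rw [hbc.eq, ← had.eq]; noncomm_ring

structure IsWickFamily {ι A : Type*} [DecidableEq ι] [Ring A] [Algebra ℂ A] (ħ : ℂ)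
    (ζ ζd : ι → A) : Prop where
  commute : ∀ i j, Commute (ζ i) (ζ j)
  commute_dagger : ∀ i j, Commute (ζd i) (ζd j)
  lie_dagger : ∀ i j, ⁅ζ i, ζd j⁆ = if i = j then ħ • (1 : A) else 0

namespace IsWickFamily

variable {ι A : Type*} [DecidableEq ι] [Ring A] [Algebra ℂ A] {ħ : ℂ} {ζ ζd : ι → A}
  (hW : IsWickFamily ħ ζ ζd)
include hW

theorem lie_dagger_self (i : ι) : ⁅ζ i, ζd i⁆ = ħ • (1 : A) := by
  simpa using hW.lie_dagger i i

theorem dagger_lie_self (i : ι) : ⁅ζd i, ζ i⁆ = -(ħ • (1 : A)) := by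
  rw [← hW.lie_dagger_self i, Ring.lie_def, Ring.lie_def, neg_sub]

theorem mul_dagger_self (i : ι) : ζ i * ζd i = ζd i * ζ i + ħ • (1 : A) := by
  rw [← hW.lie_dagger_self i, Ring.lie_def, add_sub_cancel]

theorem commute_dagger_of_ne {i j : ι} (h : i ≠ j) : Commute (ζ i) (ζd j) := by
  rw [commute_iff_lie_eq, hW.lie_dagger, if_neg h]

theorem lie_mul_dagger (i k : ι) :
    ⁅ζ i * ζd k, ζd i * ζ k⁆ = ħ • (ζ k * ζd k - ζ i * ζd i) := by
  rw [lie_mul_mul_of_commute (hW.commute i k) (hW.commute_dagger k i),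
    hW.dagger_lie_self, hW.lie_dagger_self, mul_neg, mul_smul_comm, mul_one, smul_mul_assoc,
    smul_mul_assoc, one_mul, smul_sub, neg_add_eq_sub]

theorem lie_mul_dagger_eq_zero {i j k l : ι} (hij : i ≠ j) (hkl : k ≠ l) :
    ⁅ζ i * ζd k, ζd j * ζ l⁆ = 0 := by
  rw [lie_mul_mul_of_commute (hW.commute i l) (hW.commute_dagger k j),
    (hW.commute_dagger_of_ne hkl.symm).symm.lie_eq, (hW.commute_dagger_of_ne hij).lie_eq]
  simp

end IsWickFamily

/-- In the Wick algebra on four generators, with `α = 2(ζ₀ζ₂† + ζ₁ζ₃†)`,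
`α† = 2(ζ₀†ζ₂ + ζ₁†ζ₃)`, `x = ζ₀ζ₀† + ζ₁ζ₁† − ζ₂ζ₂† − ζ₃ζ₃†`, `R₀² = ζ₀†ζ₀ + ζ₁ζ₁†`,
`R₁² = ζ₂†ζ₂ + ζ₃ζ₃†`, one has `x = R₀² − R₁²` and
`[α, α†] = −4·hbar·x = 4·hbar·(R₁² − R₀²)`. -/
theorem stmt9 {A : Type*} [Ring A] [Algebra ℂ A] (hbar : ℂ)
    (ζ ζd : Fin 4 → A)
    (h1 : ∀ i j, ζ i * ζ j = ζ j * ζ i)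
    (h2 : ∀ i j, ζd i * ζd j = ζd j * ζd i)
    (h3 : ∀ i j, ζ i * ζd j - ζd j * ζ i = if i = j then hbar • (1 : A) else 0) :
    let α : A := 2 * (ζ 0 * ζd 2 + ζ 1 * ζd 3)
    let αd : A := 2 * (ζd 0 * ζ 2 + ζd 1 * ζ 3)
    let x : A := ζ 0 * ζd 0 + ζ 1 * ζd 1 - ζ 2 * ζd 2 - ζ 3 * ζd 3
    let R0sq : A := ζd 0 * ζ 0 + ζ 1 * ζd 1
    let R1sq : A := ζd 2 * ζ 2 + ζ 3 * ζd 3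
    x = R0sq - R1sq ∧
    α * αd - αd * α = (-(4 * hbar)) • x ∧
    α * αd - αd * α = (4 * hbar) • (R1sq - R0sq) := by
  intro α αd x R0sq R1sq
  have hW : IsWickFamily hbar ζ ζd := ⟨h1, h2, h3⟩
  have hx : x = R0sq - R1sq := by
    simp only [x, R0sq, R1sq, hW.mul_dagger_self 0, hW.mul_dagger_self 2]
    abel
  have hlie : ⁅α, αd⁆ = (-(4 * hbar)) • x := by
    have hexpand : ⁅α, αd⁆ = 4 * (⁅ζ 0 * ζd 2, ζd 0 * ζ 2⁆ + ⁅ζ 0 * ζd 2, ζd 1 * ζ 3⁆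
        + ⁅ζ 1 * ζd 3, ζd 0 * ζ 2⁆ + ⁅ζ 1 * ζd 3, ζd 1 * ζ 3⁆) := by
      simp only [α, αd, Ring.lie_def]
      noncomm_ring
    rw [hexpand, hW.lie_mul_dagger, hW.lie_mul_dagger,
      hW.lie_mul_dagger_eq_zero (by decide) (by decide),
      hW.lie_mul_dagger_eq_zero (by decide) (by decide),
      ← map_ofNat (algebraMap ℂ A) 4, ← Algebra.smul_def]
    module
  refine ⟨hx, hlie, ?_⟩
  rw [← Ring.lie_def, hlie, hx, neg_smul, ← smul_neg, neg_sub]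
end

section
/- In the Wick algebra on four generators, with β := 2·(ζ₁·ζ₂ − ζ₀·ζ₃), β† := 2·(ζ₁†·ζ₂† − ζ₀†·ζ₃†), R₀² := ζ₀†·ζ₀ + ζ₁·ζ₁†, and R₁² := ζ₂†·ζ₂ + ζ₃·ζ₃†, one has [β, β†] = 4·ħ·(R₀² + R₁²). -/
/-!
Expanding the bracket, the mixed terms `⁅ζ₁ζ₂, ζ₀†ζ₃†⁆` and `⁅ζ₀ζ₃, ζ₁†ζ₂†⁆` vanish because their
indices are disjoint, while for `i ≠ j` one has `⁅ζᵢζⱼ, ζᵢ†ζⱼ†⁆ = ħ(ζᵢ†ζᵢ + ζⱼζⱼ†)`. Finally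
`ζ₁†ζ₁ + ζ₂ζ₂† = ζ₁ζ₁† + ζ₂†ζ₂`, since `⁅ζ₁, ζ₁†⁆ = ⁅ζ₂, ζ₂†⁆ = ħ`.
-/

section

variable {R A : Type*} [CommRing R] [Ring A] [Algebra R A]

theorem lie_mul_mul_of_lie_eq_smul_one {a b c d : A} {r s : R} (hbc : Commute b c)
    (had : Commute a d) (hac : ⁅a, c⁆ = r • 1) (hbd : ⁅b, d⁆ = s • 1) :
    ⁅a * b, c * d⁆ = s • (c * a) + r • (b * d) := by
  rw [Ring.lie_def] at *
  linear_combination (norm := skip)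
    a * hbc.eq * d + c * had.eq * b + hac * (b * d) + c * a * hbd
  simp only [smul_mul_assoc, one_mul, mul_smul_comm, mul_one]
  noncomm_ring

end

section Wick

variable {R A ι : Type*} [CommRing R] [Ring A] [Algebra R A] [DecidableEq ι] {ħ : R}
  {ζ ζd : ι → A} (hccr : ∀ i j, ζ i * ζd j - ζd j * ζ i = if i = j then ħ • (1 : A) else 0)
include hccr

theorem lie_wick_self (i : ι) : ⁅ζ i, ζd i⁆ = ħ • 1 := by
  simpa [Ring.lie_def] using hccr i i

theorem commute_wick_of_ne {i j : ι} (hij : i ≠ j) : Commute (ζ i) (ζd j) :=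
  sub_eq_zero.mp <| by simpa [hij] using hccr i j

theorem lie_wick_mul_mul_of_ne {i j : ι} (hij : i ≠ j) :
    ⁅ζ i * ζ j, ζd i * ζd j⁆ = ħ • (ζd i * ζ i + ζ j * ζd j) := by
  rw [smul_add]
  exact lie_mul_mul_of_lie_eq_smul_one (commute_wick_of_ne hccr hij.symm)
    (commute_wick_of_ne hccr hij) (lie_wick_self hccr i) (lie_wick_self hccr j)

theorem commute_wick_mul_mul {i j k l : ι} (hik : i ≠ k) (hil : i ≠ l) (hjk : j ≠ k)
    (hjl : j ≠ l) : Commute (ζ i * ζ j) (ζd k * ζd l) :=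
  ((commute_wick_of_ne hccr hik).mul_right (commute_wick_of_ne hccr hil)).mul_left
    ((commute_wick_of_ne hccr hjk).mul_right (commute_wick_of_ne hccr hjl))

end Wick

theorem stmt10_general {A : Type*} [Ring A] [Algebra ℂ A] (hbar : ℂ)
    (ζ ζd : Fin 4 → A)
    (h3 : ∀ i j, ζ i * ζd j - ζd j * ζ i = if i = j then hbar • (1 : A) else 0) :
    let β : A := 2 * (ζ 1 * ζ 2 - ζ 0 * ζ 3)
    let βd : A := 2 * (ζd 1 * ζd 2 - ζd 0 * ζd 3)
    let R0sq : A := ζd 0 * ζ 0 + ζ 1 * ζd 1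
    let R1sq : A := ζd 2 * ζ 2 + ζ 3 * ζd 3
    β * βd - βd * β = (4 * hbar) • (R0sq + R1sq) := by
  intro β βd R0sq R1sq
  have h12 := lie_wick_mul_mul_of_ne h3 (show (1 : Fin 4) ≠ 2 by decide)
  have h03 := lie_wick_mul_mul_of_ne h3 (show (0 : Fin 4) ≠ 3 by decide)
  have c12 : Commute (ζ 1 * ζ 2) (ζd 0 * ζd 3) :=
    commute_wick_mul_mul h3 (by decide) (by decide) (by decide) (by decide)
  have c03 : Commute (ζ 0 * ζ 3) (ζd 1 * ζd 2) :=
    commute_wick_mul_mul h3 (by decide) (by decide) (by decide) (by decide)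
  have hswap : ζd 1 * ζ 1 + ζ 2 * ζd 2 = ζ 1 * ζd 1 + ζd 2 * ζ 2 := by
    linear_combination (norm := skip) lie_wick_self h3 2 - lie_wick_self h3 1
    simp only [Ring.lie_def]
    noncomm_ring
  rw [Ring.lie_def] at h12 h03
  linear_combination (norm := skip)
    4 * h12 + 4 * h03 - 4 * c12.eq - 4 * c03.eq + (4 * hbar) • hswap
  simp only [β, βd, R0sq, R1sq]
  noncomm_ring
  module

/-- In the Wick algebra on four generators, with `β = 2(ζ₁ζ₂ − ζ₀ζ₃)`,
`β† = 2(ζ₁†ζ₂† − ζ₀†ζ₃†)`, `R₀² = ζ₀†ζ₀ + ζ₁ζ₁†`, `R₁² = ζ₂†ζ₂ + ζ₃ζ₃†`,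
one has `[β, β†] = 4·hbar·(R₀² + R₁²)`. -/
theorem stmt10 {A : Type*} [Ring A] [Algebra ℂ A] (hbar : ℂ)
    (ζ ζd : Fin 4 → A)
    (h1 : ∀ i j, ζ i * ζ j = ζ j * ζ i)
    (h2 : ∀ i j, ζd i * ζd j = ζd j * ζd i)
    (h3 : ∀ i j, ζ i * ζd j - ζd j * ζ i = if i = j then hbar • (1 : A) else 0) :
    let β : A := 2 * (ζ 1 * ζ 2 - ζ 0 * ζ 3)
    let βd : A := 2 * (ζd 1 * ζd 2 - ζd 0 * ζd 3)
    let R0sq : A := ζd 0 * ζ 0 + ζ 1 * ζd 1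
    let R1sq : A := ζd 2 * ζ 2 + ζ 3 * ζd 3
    β * βd - βd * β = (4 * hbar) • (R0sq + R1sq) :=
  stmt10_general hbar ζ ζd h3
end

section
/- In the Wick algebra on four generators, with α := 2·(ζ₀·ζ₂† + ζ₁·ζ₃†), α† := 2·(ζ₀†·ζ₂ + ζ₁†·ζ₃), β := 2·(ζ₁·ζ₂ − ζ₀·ζ₃), and β† := 2·(ζ₁†·ζ₂† − ζ₀†·ζ₃†), one has [α, β†] = 0 and [β, α†] = 0. -/
/-!
Since `⁅ζᵢ, ζⱼ†⁆ = ħ δᵢⱼ` and the remaining generators commute, the commutator is a sum of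
brackets `⁅a y, b z⁆ = ⁅a, b⁆ y z` in which only the pairs `(ζ₀, ζ₀†)` and `(ζ₁, ζ₁†)` survive;
up to a factor `4` this gives `[α, β†] = ħ (ζ₃† ζ₂† - ζ₂† ζ₃†) = 0`, and likewise
`[β, α†] = ħ (ζ₃ ζ₂ - ζ₂ ζ₃) = 0`.
-/

attribute [local instance] LieRing.ofAssociativeRing

section CommutatorIdentities

variable {R : Type*} [Ring R]

theorem lie_mul_mul_of_commute_s11 {a b p q : R} (hpb : Commute p b) (haq : Commute a q)
    (hpq : Commute p q) : ⁅a * p, b * q⁆ = ⁅a, b⁆ * (p * q) := by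
  have hleft : a * p * (b * q) = a * b * (p * q) := by
    rw [mul_assoc, ← mul_assoc p, hpb.eq, mul_assoc, ← mul_assoc]
  have hright : b * q * (a * p) = b * a * (p * q) := by
    rw [mul_assoc, ← mul_assoc q, ← haq.eq, mul_assoc, ← hpq.eq, ← mul_assoc]
  rw [Ring.lie_def, Ring.lie_def, hleft, hright, sub_mul]

theorem lie_mul_add_mul_mul_sub_mul_eq_zero {a₀ a₁ b₀ b₁ y z : R}
    (hy : y ∈ Set.centralizer {a₀, a₁, b₀, b₁}) (hz : z ∈ Set.centralizer {a₀, a₁, b₀, b₁})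
    (hyz : Commute y z) (h₀₁ : ⁅a₀, b₁⁆ = 0) (h₁₀ : ⁅a₁, b₀⁆ = 0) (hc : ⁅a₀, b₀⁆ = ⁅a₁, b₁⁆) :
    ⁅a₀ * y + a₁ * z, b₁ * y - b₀ * z⁆ = 0 := by
  simp only [Set.mem_centralizer_iff, Set.forall_mem_insert, Set.mem_singleton_iff,
    forall_eq] at hy hz
  obtain ⟨hya₀, hya₁, hyb₀, hyb₁⟩ := hy
  obtain ⟨hza₀, hza₁, hzb₀, hzb₁⟩ := hz
  rw [add_lie, lie_sub, lie_sub,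
    lie_mul_mul_of_commute_s11 hyb₁.symm hya₀ (Commute.refl y),
    lie_mul_mul_of_commute_s11 hyb₀.symm hza₀ hyz,
    lie_mul_mul_of_commute_s11 hzb₁.symm hya₁ hyz.symm,
    lie_mul_mul_of_commute_s11 hzb₀.symm hza₁ (Commute.refl z), h₀₁, h₁₀, hc, hyz.eq]
  simp

theorem lie_two_mul_two_mul_eq_zero {x y : R} (h : ⁅x, y⁆ = 0) : ⁅2 * x, 2 * y⁆ = 0 := by
  simp only [two_mul, add_lie, lie_add, h, add_zero]

end CommutatorIdentities

/-- In the Wick algebra on four generators, with `α = 2(ζ₀ζ₂† + ζ₁ζ₃†)`,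
`α† = 2(ζ₀†ζ₂ + ζ₁†ζ₃)`, `β = 2(ζ₁ζ₂ − ζ₀ζ₃)`, `β† = 2(ζ₁†ζ₂† − ζ₀†ζ₃†)`,
one has `[α, β†] = 0` and `[β, α†] = 0`. -/
theorem stmt11 {A : Type*} [Ring A] [Algebra ℂ A] (hbar : ℂ)
    (ζ ζd : Fin 4 → A)
    (h1 : ∀ i j, ζ i * ζ j = ζ j * ζ i)
    (h2 : ∀ i j, ζd i * ζd j = ζd j * ζd i)
    (h3 : ∀ i j, ζ i * ζd j - ζd j * ζ i = if i = j then hbar • (1 : A) else 0) :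
    let α : A := 2 * (ζ 0 * ζd 2 + ζ 1 * ζd 3)
    let αd : A := 2 * (ζd 0 * ζ 2 + ζd 1 * ζ 3)
    let β : A := 2 * (ζ 1 * ζ 2 - ζ 0 * ζ 3)
    let βd : A := 2 * (ζd 1 * ζd 2 - ζd 0 * ζd 3)
    α * βd - βd * α = 0 ∧ β * αd - αd * β = 0 := by
  intro α αd β βd
  have hmixed : ∀ i j, i ≠ j → Commute (ζ i) (ζd j) := fun i j hij =>
    sub_eq_zero.mp (by rw [h3, if_neg hij])
  have hcanon : ∀ i, ⁅ζ i, ζd i⁆ = hbar • 1 := fun i => by rw [Ring.lie_def, h3, if_pos rfl]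
  have hcentral_d : ∀ k, k ≠ 0 → k ≠ 1 → ζd k ∈ Set.centralizer {ζ 0, ζ 1, ζd 0, ζd 1} :=
    fun k hk₀ hk₁ => by
      simp only [Set.mem_centralizer_iff, Set.forall_mem_insert, Set.mem_singleton_iff, forall_eq]
      exact ⟨hmixed 0 k hk₀.symm, hmixed 1 k hk₁.symm, h2 0 k, h2 1 k⟩
  have hcentral : ∀ k, k ≠ 0 → k ≠ 1 → ζ k ∈ Set.centralizer {ζd 0, ζd 1, ζ 0, ζ 1} :=
    fun k hk₀ hk₁ => by
      simp only [Set.mem_centralizer_iff, Set.forall_mem_insert, Set.mem_singleton_iff, forall_eq]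
      exact ⟨(hmixed k 0 hk₀).symm, (hmixed k 1 hk₁).symm, h1 0 k, h1 1 k⟩
  rw [← Ring.lie_def, ← Ring.lie_def, ← lie_skew β αd, neg_eq_zero]
  refine ⟨lie_two_mul_two_mul_eq_zero ?_, lie_two_mul_two_mul_eq_zero ?_⟩
  · exact lie_mul_add_mul_mul_sub_mul_eq_zero (hcentral_d 2 (by decide) (by decide))
      (hcentral_d 3 (by decide) (by decide))
      (h2 2 3) (hmixed 0 1 (by decide)).lie_eq (hmixed 1 0 (by decide)).lie_eq
      (by rw [hcanon, hcanon])
  · exact lie_mul_add_mul_mul_sub_mul_eq_zero (hcentral 2 (by decide) (by decide))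
      (hcentral 3 (by decide) (by decide))
      (h1 2 3) (hmixed 1 0 (by decide)).symm.lie_eq (hmixed 0 1 (by decide)).symm.lie_eq
      (by rw [← lie_skew, ← lie_skew (ζd 1), hcanon, hcanon])
end

section
/- Let A be a commutative ℂ-algebra equipped with a ℤ²-grading: a family of ℂ-submodules A_{(n,m)} ((n,m) ∈ ℤ²) such that A is their internal direct sum and A_{(n,m)}·A_{(k,r)} ⊆ A_{(n+k, m+r)}. Fix θ ∈ ℝ, and let ⋆_θ be the unique ℂ-bilinear map A × A → A such that for homogeneous elements f ∈ A_{(n,m)} and h ∈ A_{(k,r)}: f ⋆_θ h = e^{π i θ (n·r − m·k)} · f·h. Then ⋆_θ is associative (and respects the grading: A_{(n,m)} ⋆_θ A_{(k,r)} ⊆ A_{(n+k,m+r)}), so (A, ⋆_θ) is an associative, generally noncommutative, ℂ-algebra. -/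
/-!
The deformed product is the bilinear extension of `(x, y) ↦ c p q • (x * y)` on homogeneous
elements of degrees `p, q`. On homogeneous triples both bracketings of a triple product equal
a scalar multiple of `x * y * z`, the scalars being `c p q * c (p + q) r` and `c q r * c p (q + r)`.
These agree whenever `c` is multiplicative in each variable, as is the Connes–Landi phase
`exp (π i θ (p₁ q₂ - p₂ q₁))`, the exponential of a biadditive form. Since a bilinear map is
determined by its values on homogeneous elements, this gives both uniqueness and associativity.
-/

open DirectSum

namespace DirectSum

variable {ι R M N : Type*} [DecidableEq ι] [CommSemiring R] [AddCommMonoid M] [Module R M]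
  [AddCommMonoid N] [Module R N] (ℳ : ι → Submodule R M) [Decomposition ℳ]

theorem decompose_lhom_ext_of_mem ⦃f g : M →ₗ[R] N⦄
    (h : ∀ i x, x ∈ ℳ i → f x = g x) : f = g :=
  decompose_lhom_ext ℳ fun i => LinearMap.ext fun x => h i x x.2

theorem decompose_lhom_ext₂_of_mem ⦃f g : M →ₗ[R] M →ₗ[R] N⦄
    (h : ∀ i j x y, x ∈ ℳ i → y ∈ ℳ j → f x y = g x y) : f = g :=
  decompose_lhom_ext_of_mem ℳ fun i x hx =>
    decompose_lhom_ext_of_mem ℳ fun j y hy => h i j x y hx hy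

end DirectSum

namespace GradedAlgebra

theorem cocycle_of_bimultiplicative {ι M : Type*} [AddMonoid ι] [CommMonoid M] {c : ι → ι → M}
    (hl : ∀ i j k, c (i + j) k = c i k * c j k) (hr : ∀ i j k, c i (j + k) = c i j * c i k)
    (i j k : ι) : c i j * c (i + j) k = c j k * c i (j + k) := by
  rw [hl, hr]
  ac_rfl

variable {ι R A : Type*} [DecidableEq ι] [CommSemiring R] [Semiring A]
  [Algebra R A] (𝒜 : ι → Submodule R A) [Decomposition 𝒜] (c : ι → ι → R)

noncomputable def twistedMul : A →ₗ[R] A →ₗ[R] A :=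
  (toModule R ι _ fun i => (toModule R ι _ fun j =>
      (c i j • (LinearMap.mul R A).compl₁₂ (𝒜 i).subtype (𝒜 j).subtype).flip).flip).compl₁₂
    (decomposeLinearEquiv 𝒜).toLinearMap (decomposeLinearEquiv 𝒜).toLinearMap

variable {𝒜 c}

theorem twistedMul_apply_of_mem {i j : ι} {x y : A} (hx : x ∈ 𝒜 i) (hy : y ∈ 𝒜 j) :
    twistedMul 𝒜 c x y = c i j • (x * y) := by
  lift x to 𝒜 i using hx
  lift y to 𝒜 j using hy
  simp [twistedMul]

theorem eq_twistedMul {S : A →ₗ[R] A →ₗ[R] A}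
    (hS : ∀ i j x y, x ∈ 𝒜 i → y ∈ 𝒜 j → S x y = c i j • (x * y)) :
    S = twistedMul 𝒜 c :=
  decompose_lhom_ext₂_of_mem 𝒜 fun i j x y hx hy => by
    rw [hS i j x y hx hy, twistedMul_apply_of_mem hx hy]

variable [AddMonoid ι] [SetLike.GradedMul 𝒜]

theorem twistedMul_mem {i j : ι} {x y : A} (hx : x ∈ 𝒜 i) (hy : y ∈ 𝒜 j) :
    twistedMul 𝒜 c x y ∈ 𝒜 (i + j) := by
  rw [twistedMul_apply_of_mem hx hy]
  exact Submodule.smul_mem _ _ (SetLike.GradedMul.mul_mem hx hy)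

theorem twistedMul_assoc_of_mem (hc : ∀ i j k, c i j * c (i + j) k = c j k * c i (j + k))
    {i j k : ι} {x y z : A} (hx : x ∈ 𝒜 i) (hy : y ∈ 𝒜 j) (hz : z ∈ 𝒜 k) :
    twistedMul 𝒜 c (twistedMul 𝒜 c x y) z = twistedMul 𝒜 c x (twistedMul 𝒜 c y z) :=
  calc twistedMul 𝒜 c (twistedMul 𝒜 c x y) z
      = (c i j * c (i + j) k) • (x * y * z) := by
        rw [twistedMul_apply_of_mem hx hy, map_smul, LinearMap.smul_apply,
          twistedMul_apply_of_mem (SetLike.GradedMul.mul_mem hx hy) hz, smul_smul]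
    _ = (c j k * c i (j + k)) • (x * (y * z)) := by rw [hc, mul_assoc]
    _ = twistedMul 𝒜 c x (twistedMul 𝒜 c y z) := by
        rw [twistedMul_apply_of_mem hy hz, map_smul,
          twistedMul_apply_of_mem hx (SetLike.GradedMul.mul_mem hy hz), smul_smul]

theorem twistedMul_assoc (hc : ∀ i j k, c i j * c (i + j) k = c j k * c i (j + k))
    (x y z : A) :
    twistedMul 𝒜 c (twistedMul 𝒜 c x y) z = twistedMul 𝒜 c x (twistedMul 𝒜 c y z) := by
  suffices (twistedMul 𝒜 c).compr₂ (twistedMul 𝒜 c) =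
      (LinearMap.llcomp R A A A).compl₁₂ (twistedMul 𝒜 c) (twistedMul 𝒜 c) from
    LinearMap.congr_fun (LinearMap.congr_fun (LinearMap.congr_fun this x) y) z
  exact decompose_lhom_ext₂_of_mem 𝒜 fun i j x y hx hy =>
    decompose_lhom_ext_of_mem 𝒜 fun k z hz => twistedMul_assoc_of_mem hc hx hy hz

end GradedAlgebra

noncomputable def connesLandiPhase (θ : ℝ) (p q : ℤ × ℤ) : ℂ :=
  Complex.exp (Real.pi * Complex.I * (θ : ℂ) * ((p.1 : ℂ) * (q.2 : ℂ) - (p.2 : ℂ) * (q.1 : ℂ)))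

theorem connesLandiPhase_add_left (θ : ℝ) (p q r : ℤ × ℤ) :
    connesLandiPhase θ (p + q) r = connesLandiPhase θ p r * connesLandiPhase θ q r := by
  rw [connesLandiPhase, connesLandiPhase, connesLandiPhase, ← Complex.exp_add,
    Prod.fst_add, Prod.snd_add]
  congr 1
  push_cast
  ring

theorem connesLandiPhase_add_right (θ : ℝ) (p q r : ℤ × ℤ) :
    connesLandiPhase θ p (q + r) = connesLandiPhase θ p q * connesLandiPhase θ p r := by
  rw [connesLandiPhase, connesLandiPhase, connesLandiPhase, ← Complex.exp_add,
    Prod.fst_add, Prod.snd_add]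
  congr 1
  push_cast
  ring

open GradedAlgebra in
/-- Connes–Landi θ-deformation: given a commutative ℂ-algebra `A` with a ℤ²-grading by
ℂ-submodules `𝒜 (n,m)` (internal direct sum, multiplicative), and `θ ∈ ℝ`, there is a
unique ℂ-bilinear map `S` with `S f h = e^{πiθ(nr − mk)}·(f·h)` on homogeneous elements
`f ∈ 𝒜 (n,m)`, `h ∈ 𝒜 (k,r)`; and any such `S` is associative and respects the grading,
so `(A, S)` is an associative (generally noncommutative) ℂ-algebra. -/
theorem stmt14 {A : Type*} [CommRing A] [Algebra ℂ A]
    (𝒜 : ℤ × ℤ → Submodule ℂ A) [DirectSum.Decomposition 𝒜]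
    (hmul : ∀ (p q : ℤ × ℤ) (x y : A), x ∈ 𝒜 p → y ∈ 𝒜 q → x * y ∈ 𝒜 (p + q))
    (θ : ℝ) :
    (∃! S : A →ₗ[ℂ] A →ₗ[ℂ] A,
      ∀ (p q : ℤ × ℤ) (x y : A), x ∈ 𝒜 p → y ∈ 𝒜 q →
        S x y = Complex.exp (Real.pi * Complex.I * (θ : ℂ) *
          ((p.1 : ℂ) * (q.2 : ℂ) - (p.2 : ℂ) * (q.1 : ℂ))) • (x * y)) ∧
    (∀ S : A →ₗ[ℂ] A →ₗ[ℂ] A,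
      (∀ (p q : ℤ × ℤ) (x y : A), x ∈ 𝒜 p → y ∈ 𝒜 q →
        S x y = Complex.exp (Real.pi * Complex.I * (θ : ℂ) *
          ((p.1 : ℂ) * (q.2 : ℂ) - (p.2 : ℂ) * (q.1 : ℂ))) • (x * y)) →
      ((∀ x y z : A, S (S x y) z = S x (S y z)) ∧
       (∀ (p q : ℤ × ℤ) (x y : A), x ∈ 𝒜 p → y ∈ 𝒜 q → S x y ∈ 𝒜 (p + q)))) := by
  have : SetLike.GradedMul 𝒜 := ⟨fun {i j _ _} => hmul i j _ _⟩
  refine ⟨⟨twistedMul 𝒜 (connesLandiPhase θ), fun p q x y => twistedMul_apply_of_mem,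
    fun S hS => eq_twistedMul (c := connesLandiPhase θ) hS⟩, fun S hS => ?_⟩
  obtain rfl := eq_twistedMul (c := connesLandiPhase θ) hS
  exact ⟨twistedMul_assoc (cocycle_of_bimultiplicative (connesLandiPhase_add_left θ)
    (connesLandiPhase_add_right θ)), fun p q x y => twistedMul_mem⟩
end
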